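/- arXiv:1510.03684 — 4 statements merged into one kernel-verified Lean document; each statement's English description precedes it below -/
import Mathlib

section
/- Let β > 0, k > 0 with 2kβ² < 1, and f(z) = z³ - β²z. If z₁ + k f(z₁) = x₁ and z₂ + k f(z₂) = x₂, then (f(z₁) - f(z₂))(x₁ - x₂) ≥ -β²/(1 - 2kβ²) · (x₁ - x₂)²; that is, the Yosida approximation f_k satisfies a one-sided Lipschitz condition with constant β²/(1 - 2kβ²). -/
/-!
Write `d = z₁ - z₂`, `e = f z₁ - f z₂` and `D = 1 - 2kL`, so that `x₁ - x₂ = d + k e`. Then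
`D · e (d + k e) + L (d + k e)² = (e d + L d²) + k (1 - k L) e²`, and both summands are
nonnegative: the first is the one-sided Lipschitz bound of `f`, the second needs only `k ≥ 0` and
`k L < 1`. The cubic `z³ - β² z` satisfies that bound with `L = β²`, because
`(a³ - b³)(a - b) = (a - b)² (a² + a b + b²) ≥ 0`.
-/

theorem cubic_one_sided_lipschitz (β a b : ℝ) :
    -β ^ 2 * (a - b) ^ 2 ≤ ((a ^ 3 - β ^ 2 * a) - (b ^ 3 - β ^ 2 * b)) * (a - b) := by
  have hsq : 0 ≤ a ^ 2 + a * b + b ^ 2 := by nlinarith [sq_nonneg (a + b), sq_nonneg a, sq_nonneg b]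
  have hcube : ((a ^ 3 - β ^ 2 * a) - (b ^ 3 - β ^ 2 * b)) * (a - b)
      = (a - b) ^ 2 * (a ^ 2 + a * b + b ^ 2) - β ^ 2 * (a - b) ^ 2 := by ring
  rw [hcube]
  nlinarith [mul_nonneg (sq_nonneg (a - b)) hsq]

theorem yosida_one_sided_lipschitz_of_one_sided_lipschitz {f : ℝ → ℝ} {L k : ℝ} (hk : 0 ≤ k)
    (hkL : 2 * k * L < 1) (hf : ∀ a b, -L * (a - b) ^ 2 ≤ (f a - f b) * (a - b)) (z₁ z₂ : ℝ) :
    -(L / (1 - 2 * k * L)) * ((z₁ + k * f z₁) - (z₂ + k * f z₂)) ^ 2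
      ≤ (f z₁ - f z₂) * ((z₁ + k * f z₁) - (z₂ + k * f z₂)) := by
  have hD : 0 < 1 - 2 * k * L := by linarith
  have hkL' : 0 ≤ 1 - k * L := by nlinarith
  have hx : (z₁ + k * f z₁) - (z₂ + k * f z₂) = (z₁ - z₂) + k * (f z₁ - f z₂) := by ring
  rw [hx, neg_mul, div_mul_eq_mul_div, ← neg_div, div_le_iff₀ hD]
  nlinarith [hf z₁ z₂, mul_nonneg hk (mul_nonneg (sq_nonneg (f z₁ - f z₂)) hkL')]

theorem yosida_one_sided_lipschitz_general (β k : ℝ) (hk : 0 < k)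
    (h : 2 * k * β ^ 2 < 1) (z₁ z₂ x₁ x₂ : ℝ)
    (h₁ : z₁ + k * (z₁ ^ 3 - β ^ 2 * z₁) = x₁)
    (h₂ : z₂ + k * (z₂ ^ 3 - β ^ 2 * z₂) = x₂) :
    ((z₁ ^ 3 - β ^ 2 * z₁) - (z₂ ^ 3 - β ^ 2 * z₂)) * (x₁ - x₂) ≥
      -(β ^ 2 / (1 - 2 * k * β ^ 2)) * (x₁ - x₂) ^ 2 := by
  subst h₁ h₂
  exact yosida_one_sided_lipschitz_of_one_sided_lipschitz (f := fun z ↦ z ^ 3 - β ^ 2 * z)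
    hk.le h (cubic_one_sided_lipschitz β) z₁ z₂

/-- One-sided Lipschitz condition for the Yosida approximation with constant
`β²/(1 - 2kβ²)`. -/
theorem yosida_one_sided_lipschitz (β k : ℝ) (hβ : 0 < β) (hk : 0 < k)
    (h : 2 * k * β ^ 2 < 1) (z₁ z₂ x₁ x₂ : ℝ)
    (h₁ : z₁ + k * (z₁ ^ 3 - β ^ 2 * z₁) = x₁)
    (h₂ : z₂ + k * (z₂ ^ 3 - β ^ 2 * z₂) = x₂) :
    ((z₁ ^ 3 - β ^ 2 * z₁) - (z₂ ^ 3 - β ^ 2 * z₂)) * (x₁ - x₂) ≥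
      -(β ^ 2 / (1 - 2 * k * β ^ 2)) * (x₁ - x₂) ^ 2 :=
  yosida_one_sided_lipschitz_general β k hk h z₁ z₂ x₁ x₂ h₁ h₂
end

section
/- Let β > 0, k > 0 with 2kβ² < 1, and f(z) = z³ - β²z. If z + k f(z) = x, then x² ≥ (1 - 2kβ²)(z² + k² z⁶). (This is the scalar version of the coercivity estimate ‖x‖² ≥ (1-2kβ²)(‖z‖² + k²‖z‖_{L⁶}⁶).) -/
/-- Scalar coercivity estimate: if `z + k(z³ - β²z) = x` then
`x² ≥ (1 - 2kβ²)(z² + k² z⁶)`. -/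
theorem resolvent_coercivity (β k : ℝ) (hβ : 0 < β) (hk : 0 < k)
    (h : 2 * k * β ^ 2 < 1) (z x : ℝ)
    (hz : z + k * (z ^ 3 - β ^ 2 * z) = x) :
    x ^ 2 ≥ (1 - 2 * k * β ^ 2) * (z ^ 2 + k ^ 2 * z ^ 6) := by
  subst hz
  nlinarith [mul_nonneg (mul_nonneg hk.le (by positivity : (0:ℝ) ≤ z ^ 4))
      (by linarith : (0:ℝ) ≤ 2 - 2 * k * β ^ 2),
    sq_nonneg (k * β ^ 2 * z),
    mul_nonneg (mul_nonneg (pow_nonneg hk.le 3) (sq_nonneg β))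
      (by positivity : (0:ℝ) ≤ z ^ 6)]
end

section
/- For all k > 0 and λ ≥ 0, (1/2) · kλ/(1 + kλ/2) ≤ 1 and moreover kλ/(2(1 + kλ/2)) · e^{-λt} ≤ C k^{s/2} t^{-r/2} λ^{(s-r)/2} for 0 ≤ r ≤ s ≤ 2 and t > 0 when kλ < 2, where C depends only on s, r. (Scalar bound for the term F₁(t) in the semigroup error estimate.) -/
open Real

/-- Scalar bound for the term `F₁(t)` in the semigroup error estimate. -/
theorem F1_bound :
    (∀ k l : ℝ, 0 < k → 0 ≤ l → (1 / 2) * (k * l / (1 + k * l / 2)) ≤ 1) ∧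
    ∀ r s : ℝ, 0 ≤ r → r ≤ s → s ≤ 2 →
      ∃ C : ℝ, 0 < C ∧ ∀ k l t : ℝ, 0 < k → 0 ≤ l → 0 < t → k * l < 2 →
        k * l / (2 * (1 + k * l / 2)) * Real.exp (-(l * t))
          ≤ C * k ^ (s / 2) * t ^ (-(r / 2)) * l ^ ((s - r) / 2) := by
  constructor
  · intro k l hk hl
    have h1 : (0:ℝ) < 1 + k * l / 2 := by positivity
    have h2 : k * l / (1 + k * l / 2) ≤ 2 := by
      rw [div_le_iff₀ h1]; nlinarith
    linarith
  · intro r s hr hrs hs2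
    refine ⟨1, one_pos, fun k l t hk hl ht hkl => ?_⟩
    rcases eq_or_lt_of_le hl with h0 | hl
    · rw [← h0]
      simp
      positivity
    have hx : 0 < k * l := mul_pos hk hl
    have hd : (0:ℝ) < 2 * (1 + k * l / 2) := by positivity
    have hs0 : 0 ≤ s := le_trans hr hrs
    have step1 : k * l / (2 * (1 + k * l / 2)) ≤ (k * l) ^ (s / 2) := by
      rcases le_or_gt (k * l) 1 with h | h
      · calc k * l / (2 * (1 + k * l / 2)) ≤ k * l := by
              rw [div_le_iff₀ hd]; nlinarith
          _ = (k * l) ^ (1:ℝ) := (rpow_one _).symm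
          _ ≤ (k * l) ^ (s / 2) := by
              apply rpow_le_rpow_of_exponent_ge hx h; linarith
      · calc k * l / (2 * (1 + k * l / 2)) ≤ 1 := by
              rw [div_le_one hd]; nlinarith
          _ ≤ (k * l) ^ (s / 2) := one_le_rpow h.le (by linarith)
    have hlt : 0 < l * t := mul_pos hl ht
    have key : (l * t) ^ (r / 2) ≤ Real.exp (l * t) := by
      rcases le_or_gt (l * t) 1 with h | h
      · calc (l * t) ^ (r / 2) ≤ 1 := rpow_le_one hlt.le h (by linarith)
          _ ≤ Real.exp (l * t) := Real.one_le_exp hlt.le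
      · calc (l * t) ^ (r / 2) ≤ (l * t) ^ (1:ℝ) := by
              apply rpow_le_rpow_of_exponent_le h.le; linarith
          _ = l * t := rpow_one _
          _ ≤ Real.exp (l * t) := by linarith [Real.add_one_le_exp (l * t)]
    have step2 : Real.exp (-(l * t)) ≤ (l * t) ^ (-(r / 2)) := by
      rw [Real.exp_neg, rpow_neg hlt.le]
      exact inv_anti₀ (rpow_pos_of_pos hlt _) key
    calc k * l / (2 * (1 + k * l / 2)) * Real.exp (-(l * t))
        ≤ (k * l) ^ (s / 2) * (l * t) ^ (-(r / 2)) :=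
          mul_le_mul step1 step2 (Real.exp_pos _).le (rpow_nonneg hx.le _)
      _ = 1 * k ^ (s / 2) * t ^ (-(r / 2)) * l ^ ((s - r) / 2) := by
          rw [mul_rpow hk.le hl.le, mul_rpow hl.le ht.le]
          have : l ^ (s / 2) * l ^ (-(r / 2)) = l ^ ((s - r) / 2) := by
            rw [← rpow_add hl]; ring_nf
          rw [show k ^ (s / 2) * l ^ (s / 2) * (l ^ (-(r / 2)) * t ^ (-(r / 2)))
              = k ^ (s / 2) * (l ^ (s / 2) * l ^ (-(r / 2))) * t ^ (-(r / 2)) by ring, this]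
          ring
end

section
/- Let λ ≥ 0, k > 0, t > 0, and 0 ≤ r ≤ s ≤ 2. Then |e^{-λt} - (1 + kλ/2)^{-1} exp(-λt(1 + kλ/4)/(1 + kλ/2)²)| ≤ C k^{s/2} t^{-r/2} λ^{(s-r)/2}, where C depends only on r and s. -/
open Real

set_option maxHeartbeats 800000

lemma aux_ue (u : ℝ) : 0 ≤ u → u * Real.exp (-u) ≤ 1 := by
  intro hu
  have h1 := Real.add_one_le_exp u
  have h2 : Real.exp (-u) * Real.exp u = 1 := by rw [← Real.exp_add]; simp
  have h3 := Real.exp_pos (-u)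
  nlinarith [mul_le_mul_of_nonneg_left h1 h3.le]

lemma aux_ue2 (u : ℝ) (hu : 0 ≤ u) : u ^ 2 * Real.exp (-u) ≤ 4 := by
  have h := aux_ue (u / 2) (by linarith)
  have h2 : Real.exp (-u) = Real.exp (-(u / 2)) * Real.exp (-(u / 2)) := by
    rw [← Real.exp_add]; ring_nf
  have h3 := Real.exp_pos (-(u / 2))
  nlinarith [mul_le_mul h h (by positivity : (0:ℝ) ≤ u / 2 * Real.exp (-(u/2))) zero_le_one]

lemma aux_one_sub (u : ℝ) : 1 - Real.exp (-u) ≤ u := by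
  have := Real.add_one_le_exp (-u); linarith

lemma key_bounds (x τ : ℝ) (hx : 0 < x) (hτ : 0 < τ) :
    |Real.exp (-τ) - (1 + x / 2)⁻¹ * Real.exp (-(τ * (1 + x / 4) / (1 + x / 2) ^ 2))| ≤ 16 ∧
    |Real.exp (-τ) - (1 + x / 2)⁻¹ * Real.exp (-(τ * (1 + x / 4) / (1 + x / 2) ^ 2))| ≤ 16 * x ∧
    |Real.exp (-τ) - (1 + x / 2)⁻¹ * Real.exp (-(τ * (1 + x / 4) / (1 + x / 2) ^ 2))| ≤ 16 * x / τ := by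
  have hd : (0:ℝ) < 1 + x / 2 := by linarith
  have hd2 : (0:ℝ) < (1 + x / 2) ^ 2 := by positivity
  have hn : (0:ℝ) < 1 + x / 4 := by linarith
  set h : ℝ := (1 + x / 4) / (1 + x / 2) ^ 2 with hdef
  have hh0 : 0 < h := div_pos hn hd2
  have hhd : h * (1 + x / 2) ^ 2 = 1 + x / 4 := div_mul_cancel₀ _ hd2.ne'
  have hh1 : h ≤ 1 := by
    have e : h * (1 + x / 2) ^ 2 ≤ 1 * (1 + x / 2) ^ 2 := by rw [hhd]; nlinarith
    exact le_of_mul_le_mul_right e hd2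
  set g : ℝ := (1 + x / 2)⁻¹ with gdef
  have hg0 : 0 < g := inv_pos.mpr hd
  have hgd : g * (1 + x / 2) = 1 := inv_mul_cancel₀ hd.ne'
  have hg1 : g ≤ 1 := by
    have e : g * (1 + x / 2) ≤ 1 * (1 + x / 2) := by rw [hgd]; nlinarith
    exact le_of_mul_le_mul_right e hd
  have hexp : τ * (1 + x / 4) / (1 + x / 2) ^ 2 = τ * h := by rw [hdef]; ring
  rw [hexp]
  set E1 : ℝ := Real.exp (-τ) with E1def
  set E2 : ℝ := Real.exp (-(τ * h)) with E2def
  have hE1p : 0 < E1 := Real.exp_pos _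
  have hE2p : 0 < E2 := Real.exp_pos _
  have hE1le : E1 ≤ 1 := by rw [E1def, ← Real.exp_zero]; exact Real.exp_le_exp.mpr (by linarith)
  have hE2le : E2 ≤ 1 := by
    rw [E2def, ← Real.exp_zero]
    exact Real.exp_le_exp.mpr (by nlinarith)
  have hE12 : E1 ≤ E2 := by
    rw [E1def, E2def]; exact Real.exp_le_exp.mpr (by nlinarith)
  have hsplit : E1 = E2 * Real.exp (-(τ * (1 - h))) := by
    rw [E1def, E2def, ← Real.exp_add]; ring_nf
  have hdiff : E2 - E1 ≤ τ * (1 - h) * E2 := by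
    have h1 := aux_one_sub (τ * (1 - h))
    calc E2 - E1 = E2 * (1 - Real.exp (-(τ * (1 - h)))) := by rw [hsplit]; ring
      _ ≤ E2 * (τ * (1 - h)) := mul_le_mul_of_nonneg_left h1 hE2p.le
      _ = τ * (1 - h) * E2 := by ring
  have hB : τ * h * E2 ≤ 1 := aux_ue (τ * h) (by positivity)
  have hC : (τ * h) ^ 2 * E2 ≤ 4 := aux_ue2 (τ * h) (by positivity)
  -- polynomial facts about h and g
  have hhd2 : h ^ 2 * ((1 + x / 2) ^ 2) ^ 2 = (1 + x / 4) ^ 2 := by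
    rw [← mul_pow, hhd]
  have F1 : 1 - h ≤ x * h := by
    have e : (1 - h) * (1 + x / 2) ^ 2 ≤ x * h * (1 + x / 2) ^ 2 := by
      have r1 : (1 - h) * (1 + x / 2) ^ 2 = (1 + x / 2) ^ 2 - (1 + x / 4) := by
        rw [sub_mul, one_mul, hhd]
      have r2 : x * h * (1 + x / 2) ^ 2 = x * (1 + x / 4) := by rw [mul_assoc, hhd]
      rw [r1, r2]; nlinarith
    exact le_of_mul_le_mul_right e hd2
  have F2 : 1 - g ≤ x / 2 := by
    have e : (1 - g) * (1 + x / 2) ≤ x / 2 * (1 + x / 2) := by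
      have r1 : (1 - g) * (1 + x / 2) = x / 2 := by rw [sub_mul, one_mul, hgd]; ring
      rw [r1]; nlinarith
    exact le_of_mul_le_mul_right e hd
  have F3 : 1 - g ≤ x * h := by
    have e : (1 - g) * ((1 + x / 2) * (1 + x / 2) ^ 2)
        ≤ x * h * ((1 + x / 2) * (1 + x / 2) ^ 2) := by
      have r1 : (1 - g) * ((1 + x / 2) * (1 + x / 2) ^ 2)
          = (1 + x / 2 - g * (1 + x / 2)) * (1 + x / 2) ^ 2 := by ring
      have r2 : x * h * ((1 + x / 2) * (1 + x / 2) ^ 2)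
          = x * (h * (1 + x / 2) ^ 2) * (1 + x / 2) := by ring
      rw [r1, r2, hgd, hhd]; nlinarith
    exact le_of_mul_le_mul_right e (by positivity)
  have F4 : x ≤ 1 → 1 - h ≤ 4 * x * h ^ 2 := by
    intro hx1
    have e : (1 - h) * ((1 + x / 2) ^ 2) ^ 2 ≤ 4 * x * h ^ 2 * ((1 + x / 2) ^ 2) ^ 2 := by
      have r1 : (1 - h) * ((1 + x / 2) ^ 2) ^ 2
          = ((1 + x / 2) ^ 2 - h * (1 + x / 2) ^ 2) * (1 + x / 2) ^ 2 := by ring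
      have r2 : 4 * x * h ^ 2 * ((1 + x / 2) ^ 2) ^ 2
          = 4 * x * (h ^ 2 * ((1 + x / 2) ^ 2) ^ 2) := by ring
      rw [r1, r2, hhd, hhd2]
      nlinarith [sq_nonneg x, mul_pos hx hx]
    exact le_of_mul_le_mul_right e (by positivity)
  have F5 : 1 ≤ x → 1 ≤ 3 * x * h := by
    intro hx1
    have e : 1 * (1 + x / 2) ^ 2 ≤ 3 * x * h * (1 + x / 2) ^ 2 := by
      have r2 : 3 * x * h * (1 + x / 2) ^ 2 = 3 * x * (h * (1 + x / 2) ^ 2) := by ring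
      rw [r2, hhd]; nlinarith
    exact le_of_mul_le_mul_right e hd2
  refine ⟨?_, ?_, ?_⟩
  · have hge : 0 ≤ g * E2 := (mul_pos hg0 hE2p).le
    have hgle : g * E2 ≤ 1 := mul_le_one₀ hg1 hE2p.le hE2le
    rw [abs_le]; constructor <;> linarith
  · have h1 : τ * (1 - h) * E2 ≤ x := by
      have h2 : τ * (1 - h) * E2 ≤ τ * (x * h) * E2 :=
        mul_le_mul_of_nonneg_right (mul_le_mul_of_nonneg_left F1 hτ.le) hE2p.le
      have e3 : τ * (x * h) * E2 = x * (τ * h * E2) := by ring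
      have h4 := mul_le_mul_of_nonneg_left hB hx.le
      linarith
    rw [abs_le]
    have e0 : E1 - g * E2 = (E1 - E2) + (1 - g) * E2 := by ring
    constructor
    · have h2 : E2 - E1 ≤ x := le_trans hdiff h1
      have h3 : 0 ≤ (1 - g) * E2 := mul_nonneg (by linarith) hE2p.le
      linarith
    · have h5 : (1 - g) * E2 ≤ x / 2 * E2 := mul_le_mul_of_nonneg_right F2 hE2p.le
      have h6 : x / 2 * E2 ≤ x / 2 * 1 :=
        mul_le_mul_of_nonneg_left hE2le (by linarith)
      linarith
  · have hub : τ * (E1 - g * E2) ≤ x := by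
      have h2 : τ * ((1 - g) * E2) ≤ τ * (x * h * E2) :=
        mul_le_mul_of_nonneg_left (mul_le_mul_of_nonneg_right F3 hE2p.le) hτ.le
      have e2 : τ * (x * h * E2) = x * (τ * h * E2) := by ring
      have h4 := mul_le_mul_of_nonneg_left hB hx.le
      have e3 : τ * (E1 - g * E2) = τ * E1 - τ * E2 + τ * ((1 - g) * E2) := by ring
      have h5 : τ * E1 ≤ τ * E2 := mul_le_mul_of_nonneg_left hE12 hτ.le
      linarith
    have hlb : τ * (E2 - E1) ≤ 16 * x := by
      rcases le_total x 1 with hx1 | hx1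
      · have hm1 : τ * (E2 - E1) ≤ τ * (τ * (1 - h) * E2) :=
          mul_le_mul_of_nonneg_left hdiff hτ.le
        have hm2 : (1 - h) * (τ ^ 2 * E2) ≤ 4 * x * h ^ 2 * (τ ^ 2 * E2) :=
          mul_le_mul_of_nonneg_right (F4 hx1) (by positivity)
        have e1 : τ * (τ * (1 - h) * E2) = (1 - h) * (τ ^ 2 * E2) := by ring
        have e2 : 4 * x * h ^ 2 * (τ ^ 2 * E2) = 4 * x * ((τ * h) ^ 2 * E2) := by ring
        have hm3 : 4 * x * ((τ * h) ^ 2 * E2) ≤ 4 * x * 4 :=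
          mul_le_mul_of_nonneg_left hC (by positivity)
        linarith
      · have hm : τ * E2 * 1 ≤ τ * E2 * (3 * x * h) :=
          mul_le_mul_of_nonneg_left (F5 hx1) (mul_pos hτ hE2p).le
        have e1 : τ * E2 * (3 * x * h) = 3 * x * (τ * h * E2) := by ring
        have hm2 : 3 * x * (τ * h * E2) ≤ 3 * x * 1 :=
          mul_le_mul_of_nonneg_left hB (by positivity)
        have h5 : 0 < τ * E1 := mul_pos hτ hE1p
        have e2 : τ * (E2 - E1) = τ * E2 - τ * E1 := by ring
        linarith
    rw [abs_le]
    constructor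
    · rw [neg_le, le_div_iff₀ hτ]
      have e : -(E1 - g * E2) * τ = τ * (E2 - E1) - τ * ((1 - g) * E2) := by ring
      have h3 : 0 ≤ τ * ((1 - g) * E2) :=
        mul_nonneg hτ.le (mul_nonneg (by linarith) hE2p.le)
      linarith
    · rw [le_div_iff₀ hτ]
      have e : (E1 - g * E2) * τ = τ * (E1 - g * E2) := by ring
      linarith


lemma interp (A x τ r s : ℝ) (hA : 0 ≤ A) (hx : 0 < x) (hτ : 0 < τ)
    (hr : 0 ≤ r) (hrs : r ≤ s) (hs : s ≤ 2)
    (h1 : A ≤ 16) (h2 : A ≤ 16 * x) (h3 : A ≤ 16 * x / τ) :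
    A ≤ 16 * x ^ (s / 2) * τ ^ (-(r / 2)) := by
  set a : ℝ := 1 - s / 2 with adef
  set b : ℝ := (s - r) / 2 with bdef
  set c : ℝ := r / 2 with cdef
  have ha : 0 ≤ a := by rw [adef]; linarith
  have hb : 0 ≤ b := by rw [bdef]; linarith
  have hc : 0 ≤ c := by rw [cdef]; linarith
  rcases eq_or_lt_of_le hA with hA0 | hA0
  · rw [← hA0]; positivity
  have key : A ≤ 16 ^ a * (16 * x) ^ b * (16 * x / τ) ^ c := by
    calc A = A ^ a * A ^ b * A ^ c := by
          rw [← Real.rpow_add hA0, ← Real.rpow_add hA0, adef, bdef, cdef]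
          rw [show 1 - s / 2 + (s - r) / 2 + r / 2 = 1 by ring, Real.rpow_one]
      _ ≤ 16 ^ a * (16 * x) ^ b * (16 * x / τ) ^ c := by
          apply mul_le_mul
          apply mul_le_mul
          · exact Real.rpow_le_rpow hA h1 ha
          · exact Real.rpow_le_rpow hA h2 hb
          · positivity
          · positivity
          · exact Real.rpow_le_rpow hA h3 hc
          · positivity
          · positivity
  refine le_trans key (le_of_eq ?_)
  have h16 : (0:ℝ) < 16 := by norm_num
  rw [Real.div_rpow (by positivity) hτ.le, Real.mul_rpow h16.le hx.le,
    Real.mul_rpow h16.le hx.le]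
  rw [Real.rpow_neg hτ.le, div_eq_mul_inv]
  have e16 : (16:ℝ) ^ a * ((16:ℝ) ^ b * (16:ℝ) ^ c) = 16 := by
    rw [← Real.rpow_add h16, ← Real.rpow_add h16, adef, bdef, cdef]
    rw [show 1 - s / 2 + ((s - r) / 2 + r / 2) = 1 by ring, Real.rpow_one]
  have ex : x ^ b * x ^ c = x ^ (s / 2) := by
    rw [← Real.rpow_add hx, bdef, cdef]
    rw [show (s - r) / 2 + r / 2 = s / 2 by ring]
  have eτ : (τ ^ c)⁻¹ = (τ ^ (r / 2))⁻¹ := by rw [cdef]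
  calc (16:ℝ) ^ a * ((16:ℝ) ^ b * x ^ b) * ((16:ℝ) ^ c * x ^ c * (τ ^ c)⁻¹)
      = ((16:ℝ) ^ a * ((16:ℝ) ^ b * (16:ℝ) ^ c)) * (x ^ b * x ^ c) * (τ ^ c)⁻¹ := by ring
    _ = 16 * x ^ (s / 2) * (τ ^ (r / 2))⁻¹ := by rw [e16, ex, eτ]


/-- Scalar (spectral) form of the semigroup approximation error estimate. -/
theorem semigroup_scalar_error (r s : ℝ) (hr : 0 ≤ r) (hrs : r ≤ s) (hs : s ≤ 2) :
    ∃ C : ℝ, 0 < C ∧ ∀ l k t : ℝ, 0 ≤ l → 0 < k → 0 < t →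
      |Real.exp (-(l * t)) -
          (1 + k * l / 2)⁻¹ * Real.exp (-(l * t * (1 + k * l / 4) / (1 + k * l / 2) ^ 2))|
        ≤ C * k ^ (s / 2) * t ^ (-(r / 2)) * l ^ ((s - r) / 2) := by
  refine ⟨16, by norm_num, ?_⟩
  intro l k t hl hk ht
  rcases hl.eq_or_lt with hl0 | hl0
  · rw [← hl0]
    have hlhs : |Real.exp (-((0:ℝ) * t)) -
        (1 + k * 0 / 2)⁻¹ * Real.exp (-((0:ℝ) * t * (1 + k * 0 / 4) / (1 + k * 0 / 2) ^ 2))|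
        = 0 := by norm_num
    rw [hlhs]
    positivity
  · have hx : 0 < k * l := mul_pos hk hl0
    have hτ : 0 < l * t := mul_pos hl0 ht
    obtain ⟨b1, b2, b3⟩ := key_bounds (k * l) (l * t) hx hτ
    have hmain := interp _ (k * l) (l * t) r s (abs_nonneg _) hx hτ hr hrs hs b1 b2 b3
    refine le_trans hmain (le_of_eq ?_)
    rw [Real.mul_rpow hk.le hl0.le, Real.mul_rpow hl0.le ht.le]
    have el : l ^ (s / 2) * l ^ (-(r / 2)) = l ^ ((s - r) / 2) := by
      rw [← Real.rpow_add hl0, show s / 2 + -(r / 2) = (s - r) / 2 by ring]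
    calc 16 * (k ^ (s / 2) * l ^ (s / 2)) * (l ^ (-(r / 2)) * t ^ (-(r / 2)))
        = 16 * k ^ (s / 2) * t ^ (-(r / 2)) * (l ^ (s / 2) * l ^ (-(r / 2))) := by ring
      _ = 16 * k ^ (s / 2) * t ^ (-(r / 2)) * l ^ ((s - r) / 2) := by rw [el]
end
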